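/- Let T be an even X-tree, let π be a partition of X displayed by T, and let F be a subset of edges of T that displays π. Then the weak X-tree T/F obtained from T by contracting every edge of F (labelling each resulting merged vertex by the union of the label sets of the vertices identified into it) is an even X-tree. -/

import Mathlib

open scoped Classical

/-- A weak X-tree: a finite tree together with a labelling map `lab : X → V`
such that every degree-one vertex (i.e. vertex with a unique neighbour) is labelled. -/
structure WeakXTree (X : Type) [Fintype X] [DecidableEq X] where
  V : Type
  [fintypeV : Fintype V]
  [decEqV : DecidableEq V]
  G : SimpleGraph V
  isTree : G.IsTree
  lab : X → V
  leaf_labelled : ∀ v : V, (∃! w : V, G.Adj v w) → v ∈ Set.range lab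

attribute [instance] WeakXTree.fintypeV WeakXTree.decEqV

variable {X : Type} [Fintype X] [DecidableEq X]

namespace WeakXTree

/-- A leaf is a vertex with a unique neighbour (degree one). -/
def IsLeaf (T : WeakXTree X) (v : T.V) : Prop := ∃! w : T.V, T.G.Adj v w

/-- The split of `X` displayed by an edge `e` of the tree: the (two) sets
`φ⁻¹(V₁)`, `φ⁻¹(V₂)` where `V₁, V₂` are the components of `T ∖ e`. -/
noncomputable def splitOf (T : WeakXTree X) (e : Sym2 T.V) : Finset (Finset X) :=
  Finset.image (fun u : T.V =>
    Finset.univ.filter (fun x : X => (T.G.deleteEdges {e}).Reachable u (T.lab x)))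
    Finset.univ

/-- The multiset of splits displayed by the edges of a weak X-tree. -/
noncomputable def splits (T : WeakXTree X) : Multiset (Finset (Finset X)) :=
  T.G.edgeFinset.val.map T.splitOf

end WeakXTree

/-- A partition of `X`: nonempty parts, every element of `X` in exactly one part. -/
def IsPartition (π : Finset (Finset X)) : Prop :=
  (∀ A ∈ π, A.Nonempty) ∧ ∀ x : X, ∃! A : Finset X, A ∈ π ∧ x ∈ A

/-- A split of `X` is a partition of `X` into exactly two parts. -/
def IsSplit (σ : Finset (Finset X)) : Prop := IsPartition σ ∧ σ.card = 2

/-- A split system on `X` is a multiset of splits of `X`. -/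
def IsSplitSystem (S : Multiset (Finset (Finset X))) : Prop := ∀ σ ∈ S, IsSplit σ

/-- Two splits `{A₁,B₁}` and `{A₂,B₂}` are compatible if one of the four
intersections of a part of one with a part of the other is empty. -/
def SplitsCompatible (σ₁ σ₂ : Finset (Finset X)) : Prop :=
  ∃ A ∈ σ₁, ∃ B ∈ σ₂, A ∩ B = ∅

/-- A split system is compatible if its splits are pairwise compatible. -/
def CompatibleSystem (S : Multiset (Finset (Finset X))) : Prop :=
  ∀ σ₁ ∈ S, ∀ σ₂ ∈ S, SplitsCompatible σ₁ σ₂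

/-- A partition system on `X`: a multiset of partitions of `X` into at least two parts. -/
def IsPartitionSystem (P : Multiset (Finset (Finset X))) : Prop :=
  ∀ π ∈ P, IsPartition π ∧ 2 ≤ π.card

/-- The multiset of splits `{A, X − A}` for `A` a part of the partition `π`. -/
def partitionSplits (π : Finset (Finset X)) : Multiset (Finset (Finset X)) :=
  π.val.map (fun A => ({A, Aᶜ} : Finset (Finset X)))

/-- `Σ_Π`: the multiset union over `π ∈ Π` of the splits `{A, X − A}`, `A ∈ π`. -/
def systemSplits (P : Multiset (Finset (Finset X))) : Multiset (Finset (Finset X)) :=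
  P.bind partitionSplits

/-- A partition system is strongly compatible if any two of its partitions are
equal or have parts whose union is `X`. -/
def StronglyCompatible (P : Multiset (Finset (Finset X))) : Prop :=
  ∀ π₁ ∈ P, ∀ π₂ ∈ P, π₁ = π₂ ∨ ∃ A ∈ π₁, ∃ B ∈ π₂, A ∪ B = Finset.univ

namespace WeakXTree

/-- A weak X-tree is even if all pairwise distances between labelled vertices are even. -/
def IsEven (T : WeakXTree X) : Prop :=
  ∀ x y : X, Even (T.G.dist (T.lab x) (T.lab y))

/-- A vertex of a weak X-tree is even if it has even distance to some leaf. -/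
def EvenVertex (T : WeakXTree X) (v : T.V) : Prop :=
  ∃ l : T.V, T.IsLeaf l ∧ Even (T.G.dist v l)

/-- A set `E` of edges of `T` displays the partition `π` if there is a bijection
`ξ : π → E` with `σ_{ξ(A)} = {A, X − A}` for each part `A ∈ π`. -/
def Displays (T : WeakXTree X) (E : Finset (Sym2 T.V)) (π : Finset (Finset X)) : Prop :=
  ↑E ⊆ T.G.edgeSet ∧ ∃ ξ : Finset X → Sym2 T.V,
    Set.BijOn ξ ↑π ↑E ∧ ∀ A ∈ π, T.splitOf (ξ A) = {A, Aᶜ}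

/-- The partition `π(v)` displayed by a vertex `v`: `x` and `y` are in the same
part iff the path from `φ(x)` to `φ(y)` does not pass through `v`. -/
noncomputable def vertexPartition (T : WeakXTree X) (v : T.V) : Finset (Finset X) :=
  Finset.image (fun x : X => Finset.univ.filter (fun y : X =>
    ∀ p : T.G.Walk (T.lab x) (T.lab y), p.IsPath → v ∉ p.support)) Finset.univ

end WeakXTree

/-- The subgraph of `T` consisting of the edges in `F`. -/
def WeakXTree.edgeSubgraph (T : WeakXTree X) (F : Finset (Sym2 T.V)) :
    SimpleGraph T.V where
  Adj u w := T.G.Adj u w ∧ s(u, w) ∈ F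
  symm := by
    constructor
    intro u w h
    refine ⟨h.1.symm, ?_⟩
    rw [Sym2.eq_swap]
    exact h.2
  loopless := by
    constructor
    intro u h
    exact h.1.ne rfl

/-- The graph `T/F` obtained from `T` by contracting every edge in `F`:
vertices are the components of the subgraph spanned by `F`, and two distinct
classes are adjacent iff some representatives are adjacent in `T`. -/
def WeakXTree.contractedGraph (T : WeakXTree X) (F : Finset (Sym2 T.V)) :
    SimpleGraph (Quotient (T.edgeSubgraph F).reachableSetoid) where
  Adj c d := c ≠ d ∧ ∃ u w : T.V,
    Quotient.mk (T.edgeSubgraph F).reachableSetoid u = c ∧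
    Quotient.mk (T.edgeSubgraph F).reachableSetoid w = d ∧ T.G.Adj u w
  symm := by
    constructor
    rintro c d ⟨hne, u, w, hu, hw, h⟩
    exact ⟨hne.symm, w, u, hw, hu, h.symm⟩
  loopless := by
    constructor
    rintro c ⟨hne, -⟩
    exact hne rfl

/-- The labelling map of the contracted tree `T/F`. -/
def WeakXTree.contractedLab (T : WeakXTree X) (F : Finset (Sym2 T.V)) (x : X) :
    Quotient (T.edgeSubgraph F).reachableSetoid :=
  Quotient.mk (T.edgeSubgraph F).reachableSetoid (T.lab x)


/-!
For a set `E` of edges of a tree, let `sepParity E a b ∈ ZMod 2` be the parity of the number of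
edges of `E` whose deletion separates `a` from `b`. It is additive along the tree, and on an edge
it is the indicator of that edge lying in `E`. With `E` all edges it is therefore the parity of
`dist a b`; with `E` the edges outside `F` it is constant on the classes of `T/F` and flips along
every edge of `T/F`, so it is the parity of distances in `T/F`. For two labels `x, y`, the edges of
`F` separating them are the edges displaying the parts that contain exactly one of `x, y`: zero or
two of them. So distances between labels in `T/F` and in `T` have the same parity.

`T/F` is a tree because a cycle in it lifts to a walk in `T` joining the ends of an edge without
using it. A leaf class of `T/F` contains a leaf of `T`, namely its vertex farthest from the
outer end of the unique edge leaving it, and leaves of `T` are labelled.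
-/

open Finset

namespace SimpleGraph

variable {V : Type*} {G H : SimpleGraph V}

lemma Walk.natCast_length_eq_add {f : V → ZMod 2} (hf : ∀ ⦃a b⦄, G.Adj a b → f a = f b + 1)
    {a b : V} (p : G.Walk a b) : (p.length : ZMod 2) = f a + f b := by
  induction p with
  | nil => simp [CharTwo.add_self_eq_zero]
  | cons h p ih =>
    rw [length_cons, Nat.cast_succ, ih, hf h]
    ring

lemma Reachable.natCast_dist_eq_add {f : V → ZMod 2} (hf : ∀ ⦃a b⦄, G.Adj a b → f a = f b + 1)
    {a b : V} (h : G.Reachable a b) : (G.dist a b : ZMod 2) = f a + f b := by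
  obtain ⟨p, hp⟩ := h.exists_walk_length_eq_dist
  rw [← hp, p.natCast_length_eq_add hf]

lemma Preconnected.reachable_deleteEdges_or (hG : G.Preconnected) (v w x : V) :
    (G.deleteEdges {s(v, w)}).Reachable x v ∨ (G.deleteEdges {s(v, w)}).Reachable x w := by
  suffices key : ∀ {y z : V} (p : G.Walk y z), z = v →
      (G.deleteEdges {s(v, w)}).Reachable y v ∨ (G.deleteEdges {s(v, w)}).Reachable y w from
    key (hG x v).some rfl
  intro y z p
  induction p with
  | nil => rintro rfl; exact .inl .rfl
  | @cons y y' _ h p ih =>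
    intro hz
    by_cases he : s(y, y') = s(v, w)
    · rcases Sym2.eq_iff.1 he with ⟨rfl, -⟩ | ⟨rfl, -⟩
      · exact .inl .rfl
      · exact .inr .rfl
    · have hyy' : (G.deleteEdges {s(v, w)}).Adj y y' := by simpa [he] using h
      exact (ih hz).imp hyy'.reachable.trans hyy'.reachable.trans

/-- In a connected graph, deleting one edge leaves at most two components. -/
lemma Preconnected.reachable_deleteEdges_or_or (hG : G.Preconnected) (e : Sym2 V) (a b c : V) :
    (G.deleteEdges {e}).Reachable a b ∨ (G.deleteEdges {e}).Reachable b c ∨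
      (G.deleteEdges {e}).Reachable a c := by
  induction e using Sym2.ind with
  | h v w =>
    rcases hG.reachable_deleteEdges_or v w a with ha | ha <;>
    rcases hG.reachable_deleteEdges_or v w b with hb | hb <;>
    rcases hG.reachable_deleteEdges_or v w c with hc | hc
    all_goals first
      | exact .inl (ha.trans hb.symm)
      | exact .inr (.inl (hb.trans hc.symm))
      | exact .inr (.inr (ha.trans hc.symm))

variable (G) in
noncomputable def sepParity (E : Finset (Sym2 V)) (a b : V) : ZMod 2 :=
  ∑ e ∈ E, if (G.deleteEdges {e}).Reachable a b then 0 else 1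

lemma sepParity_eq_zero_of_walk {E : Finset (Sym2 V)} {a b : V} (p : G.Walk a b)
    (hp : ∀ e ∈ p.edges, e ∉ E) : G.sepParity E a b = 0 :=
  sum_eq_zero fun e he =>
    if_pos ⟨p.toDeleteEdges {e} fun e' he' h => hp e' he' (Set.mem_singleton_iff.1 h ▸ he)⟩

lemma sepParity_sdiff_add [DecidableEq V] {E F : Finset (Sym2 V)} (hFE : F ⊆ E) (a b : V) :
    G.sepParity (E \ F) a b + G.sepParity F a b = G.sepParity E a b :=
  sum_sdiff hFE

lemma Preconnected.sepParity_add (hG : G.Preconnected) (E : Finset (Sym2 V)) (a b c : V) :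
    G.sepParity E a b + G.sepParity E b c = G.sepParity E a c := by
  rw [sepParity, sepParity, sepParity, ← sum_add_distrib]
  refine sum_congr rfl fun e _ => ?_
  have hor := hG.reachable_deleteEdges_or_or e a b c
  by_cases hab : (G.deleteEdges {e}).Reachable a b <;>
  by_cases hbc : (G.deleteEdges {e}).Reachable b c
  · simp [hab, hbc, hab.trans hbc]
  · have hac : ¬(G.deleteEdges {e}).Reachable a c := fun hac => hbc (hab.symm.trans hac)
    simp [hab, hbc, hac]
  · have hac : ¬(G.deleteEdges {e}).Reachable a c := fun hac => hab (hac.trans hbc.symm)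
    simp [hab, hbc, hac]
  · simp only [hab, hbc, hor.resolve_left hab |>.resolve_left hbc]
    decide

lemma IsAcyclic.sepParity_of_adj (hG : G.IsAcyclic) (E : Finset (Sym2 V)) {v w : V}
    (h : G.Adj v w) : G.sepParity E v w = if s(v, w) ∈ E then 1 else 0 := by
  rw [sepParity, ← sum_ite_eq' E s(v, w) fun _ => (1 : ZMod 2)]
  refine sum_congr rfl fun e _ => ?_
  by_cases he : e = s(v, w)
  · rw [if_neg (he ▸ isAcyclic_iff_forall_adj_isBridge.1 hG h), if_pos he]
  · have hvw : (G.deleteEdges {e}).Adj v w := by simpa [Ne.symm he] using h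
    rw [if_pos hvw.reachable, if_neg he]

lemma IsTree.sepParity_eq_add_one_of_adj (hG : G.IsTree) {E : Finset (Sym2 V)} (a : V)
    {v w : V} (h : G.Adj v w) (he : s(v, w) ∈ E) :
    G.sepParity E a v = G.sepParity E a w + 1 := by
  rw [← hG.connected.preconnected.sepParity_add E a v w, hG.isAcyclic.sepParity_of_adj E h,
    if_pos he, add_assoc, CharTwo.add_self_eq_zero, add_zero]

lemma IsTree.natCast_dist_eq_sepParity [Fintype G.edgeSet] (hG : G.IsTree) (a b : V) :
    (G.dist a b : ZMod 2) = G.sepParity G.edgeFinset a b := by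
  rw [(hG.connected a b).natCast_dist_eq_add
      fun v w h => hG.sepParity_eq_add_one_of_adj a h (mem_edgeFinset.2 h),
    sepParity_eq_zero_of_walk .nil (by simp), zero_add]

lemma IsAcyclic.mem_edges_of_adj (hG : G.IsAcyclic) {u w : V} (h : G.Adj u w)
    (p : G.Walk u w) : s(u, w) ∈ p.edges :=
  isBridge_iff_forall_walk_mem_edges.1 (isAcyclic_iff_forall_adj_isBridge.1 hG h) p

lemma IsAcyclic.adj_of_le_of_reachable (hG : G.IsAcyclic) (hHG : H ≤ G) {u w : V}
    (h : G.Adj u w) (hr : H.Reachable u w) : H.Adj u w := by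
  obtain ⟨p⟩ := hr
  have hmem := hG.mem_edges_of_adj h (p.mapLe hHG)
  rw [Walk.edges_mapLe_eq_edges] at hmem
  exact p.edges_subset_edgeSet hmem

lemma IsAcyclic.eq_of_le_of_adj_of_reachable (hG : G.IsAcyclic) (hHG : H ≤ G) {u w a b : V}
    (huw : G.Adj u w) (hab : G.Adj a b) (hua : H.Reachable u a) (hbw : H.Reachable b w)
    (hnr : ¬H.Reachable u w) : a = u ∧ b = w := by
  obtain ⟨p⟩ := id hua
  obtain ⟨q⟩ := hbw
  have hmem := hG.mem_edges_of_adj huw ((p.mapLe hHG).append (.cons hab (q.mapLe hHG)))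
  simp only [Walk.edges_append, Walk.edges_cons, Walk.edges_mapLe_eq_edges, List.mem_append,
    List.mem_cons] at hmem
  rcases hmem with hp | he | hq
  · exact absurd (H.mem_edgeSet.1 (p.edges_subset_edgeSet hp)).reachable hnr
  · rcases Sym2.eq_iff.1 he with ⟨rfl, rfl⟩ | ⟨rfl, rfl⟩
    · exact ⟨rfl, rfl⟩
    · exact absurd hua hnr
  · exact absurd (H.mem_edgeSet.1 (q.edges_subset_edgeSet hq)).reachable hnr

lemma IsTree.eq_of_adj_of_dist_add_one_eq (hG : G.IsTree) {w m b₁ b₂ : V} (h₁ : G.Adj b₁ m)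
    (h₂ : G.Adj b₂ m) (hd₁ : G.dist w b₁ + 1 = G.dist w m)
    (hd₂ : G.dist w b₂ + 1 = G.dist w m) : b₁ = b₂ := by
  obtain ⟨p₁, hp₁⟩ := (hG.connected w b₁).exists_walk_length_eq_dist
  obtain ⟨p₂, hp₂⟩ := (hG.connected w b₂).exists_walk_length_eq_dist
  have hpath := hG.isAcyclic.subsingleton_path w m |>.elim
    ⟨p₁.concat h₁, (p₁.concat h₁).isPath_of_length_eq_dist (by simp [hp₁, hd₁])⟩
    ⟨p₂.concat h₂, (p₂.concat h₂).isPath_of_length_eq_dist (by simp [hp₂, hd₂])⟩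
  simpa using congrArg (fun p : G.Path w m => p.val.penultimate) hpath

lemma IsTree.existsUnique_adj_of_forall_adj_dist_le (hG : G.IsTree) {w m : V} (hm : m ≠ w)
    (h : ∀ b, G.Adj m b → G.dist w b ≤ G.dist w m) : ∃! b, G.Adj m b := by
  have hparent : ∀ b, G.Adj m b → G.dist w b + 1 = G.dist w m := fun b hb => by
    have := h b hb
    have := hG.dist_eq_dist_add_one_of_adj w hb
    omega
  obtain ⟨p⟩ := hG.connected m w
  have hsnd := p.adj_snd (Walk.not_nil_of_ne hm)
  exact ⟨p.snd, hsnd, fun b hb =>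
    hG.eq_of_adj_of_dist_add_one_eq hb.symm hsnd.symm (hparent b hb) (hparent _ hsnd)⟩

end SimpleGraph

lemma IsPartition.sum_ite_mem {α : Type} [DecidableEq α] {π : Finset (Finset α)}
    (hπ : IsPartition π) {M : Type*} [AddCommMonoid M] (m : M) (x : α) :
    ∑ A ∈ π, (if x ∈ A then m else 0) = m := by
  obtain ⟨A, ⟨hA, hxA⟩, huniq⟩ := hπ.2 x
  rw [sum_eq_single_of_mem A hA fun B hB hBA => if_neg fun hxB => hBA (huniq B ⟨hB, hxB⟩),
    if_pos hxA]

namespace WeakXTree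

open SimpleGraph

lemma reachable_deleteEdges_lab_iff (T : WeakXTree X) {e : Sym2 T.V} {A : Finset X}
    (h : T.splitOf e = {A, Aᶜ}) (x y : X) :
    (T.G.deleteEdges {e}).Reachable (T.lab x) (T.lab y) ↔ (x ∈ A ↔ y ∈ A) := by
  have hmem : univ.filter (fun z => (T.G.deleteEdges {e}).Reachable (T.lab x) (T.lab z)) ∈
      ({A, Aᶜ} : Finset (Finset X)) := h ▸ mem_image_of_mem _ (mem_univ (T.lab x))
  rw [mem_insert, mem_singleton] at hmem
  rcases hmem with hS | hS <;>
  · have hx := Finset.ext_iff.1 hS x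
    have hy := Finset.ext_iff.1 hS y
    simp only [mem_filter, mem_univ, true_and, Reachable.rfl, mem_compl] at hx hy
    tauto

/-- The edges of `F` separating `x` from `y` are the `ξ A` for the parts `A` containing exactly
one of `x` and `y`, and there are zero or two such parts. -/
lemma sepParity_eq_zero_of_displays (T : WeakXTree X) {F : Finset (Sym2 T.V)}
    {π : Finset (Finset X)} (hπ : IsPartition π) (hF : T.Displays F π) (x y : X) :
    T.G.sepParity F (T.lab x) (T.lab y) = 0 := by
  obtain ⟨-, ξ, hξ, hsplit⟩ := hF
  calc T.G.sepParity F (T.lab x) (T.lab y)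
      = ∑ A ∈ π, ((if x ∈ A then 1 else 0) + (if y ∈ A then 1 else 0)) := by
        refine (sum_nbij ξ hξ.mapsTo hξ.injOn hξ.surjOn fun A hA => ?_).symm
        rw [T.reachable_deleteEdges_lab_iff (hsplit A hA)]
        by_cases hx : x ∈ A <;> by_cases hy : y ∈ A <;> simp +decide [hx, hy]
    _ = 0 := by rw [sum_add_distrib, hπ.sum_ite_mem, hπ.sum_ite_mem, CharTwo.add_self_eq_zero]

section Contraction

variable (T : WeakXTree X) (F : Finset (Sym2 T.V))

local notation "⟦" u "⟧ᶠ" =>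
  Quotient.mk (SimpleGraph.reachableSetoid (WeakXTree.edgeSubgraph T F)) u

lemma edgeSubgraph_le : T.edgeSubgraph F ≤ T.G := fun _ _ h => h.1

lemma exists_walk_of_mk_eq_mk {u w : T.V} (h : ⟦u⟧ᶠ = ⟦w⟧ᶠ) :
    ∃ p : T.G.Walk u w, ∀ e ∈ p.edges, e ∈ F := by
  obtain ⟨p⟩ := Quotient.exact h
  refine ⟨p.mapLe (T.edgeSubgraph_le F), fun e he => ?_⟩
  rw [Walk.edges_mapLe_eq_edges] at he
  induction e using Sym2.ind with
  | h a b => exact (p.edges_subset_edgeSet he).2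

lemma mk_eq_mk_iff_of_adj {u w : T.V} (h : T.G.Adj u w) : ⟦u⟧ᶠ = ⟦w⟧ᶠ ↔ s(u, w) ∈ F :=
  ⟨fun hq => (T.isTree.isAcyclic.adj_of_le_of_reachable (T.edgeSubgraph_le F) h
    (Quotient.exact hq)).2, fun hF => Quotient.sound (Adj.reachable ⟨h, hF⟩)⟩

lemma contractedGraph_reachable_mk {u w : T.V} (p : T.G.Walk u w) :
    (T.contractedGraph F).Reachable ⟦u⟧ᶠ ⟦w⟧ᶠ := by
  induction p with
  | nil => rfl
  | @cons a b _ h _ ih =>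
    by_cases hab : ⟦a⟧ᶠ = ⟦b⟧ᶠ
    · exact hab ▸ ih
    · have hadj : (T.contractedGraph F).Adj ⟦a⟧ᶠ ⟦b⟧ᶠ := ⟨hab, a, b, rfl, rfl, h⟩
      exact hadj.reachable.trans ih

lemma exists_walk_of_contractedGraph_walk {c d} (p : (T.contractedGraph F).Walk c d)
    {u w : T.V} (hu : ⟦u⟧ᶠ = c) (hw : ⟦w⟧ᶠ = d) :
    ∃ q : T.G.Walk u w, ∀ e ∈ q.edges, e ∈ F ∨ e.map (Quotient.mk _) ∈ p.edges := by
  induction p generalizing u with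
  | nil =>
    obtain ⟨q, hq⟩ := T.exists_walk_of_mk_eq_mk F (hu.trans hw.symm)
    exact ⟨q, fun e he => .inl (hq e he)⟩
  | cons h p ih =>
    obtain ⟨-, a, b, ha, hb, hab⟩ := id h
    obtain ⟨q₁, hq₁⟩ := T.exists_walk_of_mk_eq_mk F (hu.trans ha.symm)
    obtain ⟨q₂, hq₂⟩ := ih hb hw
    refine ⟨q₁.append (.cons hab q₂), fun e he => ?_⟩
    simp only [Walk.edges_append, Walk.edges_cons, List.mem_append, List.mem_cons] at he
    rcases he with he | rfl | he
    · exact .inl (hq₁ e he)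
    · exact .inr (by simp [ha, hb])
    · exact (hq₂ e he).imp_right (List.mem_cons_of_mem _)

lemma isAcyclic_contractedGraph : (T.contractedGraph F).IsAcyclic := by
  rintro c (_ | ⟨h, q⟩) hcyc
  · exact Walk.not_isCycle_nil hcyc
  obtain ⟨hne, u, w, hu, hw, huw⟩ := id h
  obtain ⟨q', hq'⟩ := T.exists_walk_of_contractedGraph_walk F q hw hu
  have hmem : s(w, u) ∈ q'.edges := by
    simpa [Sym2.eq_swap] using T.isTree.isAcyclic.mem_edges_of_adj huw q'.reverse
  rcases hq' _ hmem with hF | hq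
  · exact hne (hu.symm.trans (((T.mk_eq_mk_iff_of_adj F huw).2 (Sym2.eq_swap ▸ hF)).trans hw))
  · have hnodup := hcyc.edges_nodup
    rw [Walk.edges_cons, List.nodup_cons] at hnodup
    exact hnodup.1 (by simpa [hu, hw, Sym2.eq_swap] using hq)

lemma isTree_contractedGraph [Nonempty T.V] : (T.contractedGraph F).IsTree := by
  refine ⟨(connected_iff _).2 ⟨fun c d => ?_, ⟨⟦Classical.arbitrary T.V⟧ᶠ⟩⟩,
    T.isAcyclic_contractedGraph F⟩
  induction c using Quotient.ind
  induction d using Quotient.ind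
  exact T.contractedGraph_reachable_mk F (T.isTree.connected _ _).some

lemma mem_range_contractedLab_of_existsUnique_adj
    {c : Quotient (T.edgeSubgraph F).reachableSetoid} (hc : ∃! d, (T.contractedGraph F).Adj c d) :
    c ∈ Set.range (T.contractedLab F) := by
  obtain ⟨d, ⟨hne, u, w, hu, hw, huw⟩, hd⟩ := hc
  obtain ⟨m, hm, hmax⟩ := exists_max_image (univ.filter fun a => ⟦a⟧ᶠ = c) (T.G.dist w)
    ⟨u, by simp [hu]⟩
  simp only [mem_filter, mem_univ, true_and] at hm hmax
  have hleaf : ∃! b, T.G.Adj m b := by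
    refine T.isTree.existsUnique_adj_of_forall_adj_dist_le
      (fun hmw => hne (hm.symm.trans (hmw ▸ hw))) fun b hb => ?_
    by_cases hbc : ⟦b⟧ᶠ = c
    · exact hmax b hbc
    have hbd : ⟦b⟧ᶠ = d := hd _ ⟨Ne.symm hbc, m, b, hm, rfl, hb⟩
    have hnr : ¬(T.edgeSubgraph F).Reachable u w := fun h =>
      hne (hu.symm.trans ((Quotient.sound h).trans hw))
    obtain ⟨-, rfl⟩ := T.isTree.isAcyclic.eq_of_le_of_adj_of_reachable (T.edgeSubgraph_le F)
      huw hb (Quotient.exact (hu.trans hm.symm)) (Quotient.exact (hbd.trans hw.symm)) hnr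
    simp
  obtain ⟨x, hx⟩ := T.leaf_labelled m hleaf
  exact ⟨x, (congrArg _ hx).trans hm⟩

lemma natCast_dist_contractedGraph (a b : T.V) :
    ((T.contractedGraph F).dist ⟦a⟧ᶠ ⟦b⟧ᶠ : ZMod 2) =
      T.G.sepParity (T.G.edgeFinset \ F) a b := by
  let f : Quotient (T.edgeSubgraph F).reachableSetoid → ZMod 2 :=
    Quotient.lift (T.G.sepParity (T.G.edgeFinset \ F) a) fun u w h => by
      obtain ⟨p, hp⟩ := T.exists_walk_of_mk_eq_mk F (Quotient.sound h)
      rw [← T.isTree.connected.preconnected.sepParity_add _ a u w,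
        sepParity_eq_zero_of_walk p fun e he he' => (mem_sdiff.1 he').2 (hp e he), add_zero]
  have hf : ∀ ⦃c d⦄, (T.contractedGraph F).Adj c d → f c = f d + 1 := by
    rintro _ _ ⟨hne, u, w, rfl, rfl, huw⟩
    have hF : s(u, w) ∉ F := fun hF => hne ((T.mk_eq_mk_iff_of_adj F huw).2 hF)
    exact T.isTree.sepParity_eq_add_one_of_adj a huw (mem_sdiff.2 ⟨mem_edgeFinset.2 huw, hF⟩)
  rw [(T.contractedGraph_reachable_mk F (T.isTree.connected a b).some).natCast_dist_eq_add hf]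
  show T.G.sepParity _ a a + T.G.sepParity _ a b = _
  rw [sepParity_eq_zero_of_walk .nil (by simp), zero_add]

end Contraction

end WeakXTree

/-- if `T` is an even X-tree and `F` displays a partition `π` of
`X`, then the contraction `T/F` (with each merged vertex labelled by the union
of the labels identified into it) is again an even X-tree: it is a tree, every
degree-one vertex is labelled, and all distances between labelled vertices are
even. -/
theorem stmt_9 {X : Type} [Fintype X] [DecidableEq X] (hX : 2 ≤ Fintype.card X)
    (T : WeakXTree X) (hTe : T.IsEven)
    (π : Finset (Finset X)) (hπ : IsPartition π ∧ 2 ≤ π.card)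
    (F : Finset (Sym2 T.V)) (hF : T.Displays F π) :
    (T.contractedGraph F).IsTree ∧
    (∀ c, (∃! d, (T.contractedGraph F).Adj c d) →
      c ∈ Set.range (T.contractedLab F)) ∧
    (∀ x y : X,
      Even ((T.contractedGraph F).dist (T.contractedLab F x) (T.contractedLab F y))) := by
  obtain ⟨x₀⟩ : Nonempty X := Fintype.card_pos_iff.1 (by omega)
  have : Nonempty T.V := ⟨T.lab x₀⟩
  refine ⟨T.isTree_contractedGraph F,
    fun c hc => T.mem_range_contractedLab_of_existsUnique_adj F hc, fun x y => ?_⟩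
  have hFE : F ⊆ T.G.edgeFinset := fun e he => SimpleGraph.mem_edgeFinset.2 (hF.1 he)
  rw [← ZMod.natCast_eq_zero_iff_even, WeakXTree.contractedLab, WeakXTree.contractedLab,
    T.natCast_dist_contractedGraph, eq_sub_of_add_eq (SimpleGraph.sepParity_sdiff_add hFE _ _),
    ← T.isTree.natCast_dist_eq_sepParity, ZMod.natCast_eq_zero_iff_even.2 (hTe x y),
    T.sepParity_eq_zero_of_displays hπ.1 hF, sub_zero]
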